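/- arXiv:1805.02052 — 4 statements merged into one kernel-verified Lean document; each statement's English description precedes it below -/
import Mathlib

section
/- For real numbers m1, m2, n1, n2 with m1, m2, m1+m2 nonzero, the resonance function Ω(m1,n1,m2,n2) := ω(m1+m2, n1+n2) - ω(m1,n1) - ω(m2,n2), where ω(m,n) = m^5 + n^2/m, satisfies Ω(m1,n1,m2,n2) = (m1*m2/(m1+m2)) * (5*(m1+m2)^2*(m1^2 + m1*m2 + m2^2) - (n1/m1 - n2/m2)^2). -/
/-- Dispersion relation of the fifth-order KP-I equation. -/
noncomputable def omega5 (m n : ℝ) : ℝ := m^5 + n^2 / m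

theorem resonance_function_factorization
    (m1 m2 n1 n2 : ℝ) (h1 : m1 ≠ 0) (h2 : m2 ≠ 0) (h12 : m1 + m2 ≠ 0) :
    omega5 (m1 + m2) (n1 + n2) - omega5 m1 n1 - omega5 m2 n2 =
      (m1 * m2 / (m1 + m2)) *
        (5 * (m1 + m2)^2 * (m1^2 + m1 * m2 + m2^2) - (n1 / m1 - n2 / m2)^2) := by
  unfold omega5
  field_simp
  ring
end

section
/- There exist infinitely many positive integers n such that 5*n^2 + 5*n + 5 = 35*k^2 for some positive integer k; equivalently, such that √(5n^2+5n+5) ∈ √35 * ℤ. -/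
def pellSeq : ℕ → ℕ × ℕ
  | 0 => (2, 1)
  | m + 1 =>
    let p := pellSeq m
    (127 * p.1 + 336 * p.2 + 63, 48 * p.1 + 127 * p.2 + 24)

lemma pellSeq_prop (m : ℕ) :
    0 < (pellSeq m).1 ∧ 0 < (pellSeq m).2 ∧
      (pellSeq m).1 ^ 2 + (pellSeq m).1 + 1 = 7 * (pellSeq m).2 ^ 2 := by
  induction m with
  | zero => norm_num [pellSeq]
  | succ m ih =>
    obtain ⟨h1, h2, h3⟩ := ih
    set n := (pellSeq m).1
    set k := (pellSeq m).2
    refine ⟨by simp [pellSeq], by simp [pellSeq], ?_⟩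
    show (127 * n + 336 * k + 63) ^ 2 + (127 * n + 336 * k + 63) + 1
        = 7 * (48 * n + 127 * k + 24) ^ 2
    have key : (127 * n + 336 * k + 63) ^ 2 + (127 * n + 336 * k + 63) + 1 + 7 * k ^ 2
        = 7 * (48 * n + 127 * k + 24) ^ 2 + (n ^ 2 + n + 1) := by ring
    rw [h3] at key
    omega

lemma pellSeq_mono : StrictMono (fun m => (pellSeq m).1) := by
  apply strictMono_nat_of_lt_succ
  intro m
  have := (pellSeq_prop m).2.1
  simp [pellSeq]
  omega

theorem infinitely_many_resonant_periods :
    {n : ℕ | 0 < n ∧ ∃ k : ℕ, 0 < k ∧ 5 * n^2 + 5 * n + 5 = 35 * k^2}.Infinite := by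
  refine Set.infinite_of_injective_forall_mem
    (f := fun m => (pellSeq m).1) pellSeq_mono.injective ?_
  intro m
  obtain ⟨h1, h2, h3⟩ := pellSeq_prop m
  exact ⟨h1, (pellSeq m).2, h2, by omega⟩
end

section
/- Fix s ≥ 0 and t ∈ (0, 1]. For the Galilean transformations G_t^+(u₀)(x) = u₀(x + t·(mean of u₀)) − (mean of u₀) acting on H^s of the circle, the sequences u_n(x) = n^{-s}cos(nx) + n^{-1} and v_n(x) = n^{-s}cos(nx) satisfy: (i) ‖u_n − v_n‖_{H^s} → 0 as n → ∞, (ii) u_n, v_n are bounded in H^s uniformly in n, and (iii) liminf_n ‖G_t^+(u_n) − G_t^+(v_n)‖_{H^s} ≥ c·|sin t| for some constant c > 0. In particular G_t^+ is not uniformly continuous on bounded sets of H^s. -/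
open Real Filter

/-- `k`-th Fourier coefficient of a `2π`-periodic function. -/
noncomputable def fc (u : ℝ → ℂ) (k : ℤ) : ℂ :=
  (1 / (2 * π)) * ∫ x in (0:ℝ)..(2 * π), u x * Complex.exp (-Complex.I * (k : ℂ) * (x : ℂ))

/-- `H^s` norm of a `2π`-periodic complex-valued function. -/
noncomputable def HsNorm (s : ℝ) (u : ℝ → ℂ) : ℝ :=
  Real.sqrt (∑' k : ℤ, (1 + (k : ℝ)^2)^s * ‖fc u k‖^2)

/-- `H^s` norm of a real-valued function. -/
noncomputable def HsNormR (s : ℝ) (u : ℝ → ℝ) : ℝ :=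
  HsNorm s (fun x => (u x : ℂ))

/-- Mean value of a `2π`-periodic function. -/
noncomputable def meanR (u : ℝ → ℝ) : ℝ :=
  (1 / (2 * π)) * ∫ x in (0:ℝ)..(2 * π), u x

/-- Galilean transformation. -/
noncomputable def Gal (t : ℝ) (u : ℝ → ℝ) : ℝ → ℝ :=
  fun x => u (x + t * meanR u) - meanR u

open intervalIntegral

lemma intExp (m : ℤ) : (∫ x in (0:ℝ)..(2*π), Complex.exp (Complex.I * (m:ℂ) * (x:ℝ))) =
    if m = 0 then (2*π:ℂ) else 0 := by
  by_cases hm : m = 0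
  · simp [hm]
  · rw [if_neg hm]
    have hc : (Complex.I * (m:ℂ)) ≠ 0 :=
      mul_ne_zero Complex.I_ne_zero (by exact_mod_cast hm)
    have : (∫ x in (0:ℝ)..(2*π), Complex.exp (Complex.I * (m:ℂ) * (x:ℝ)))
        = (∫ x in (0:ℝ)..(2*π), Complex.exp ((Complex.I * (m:ℂ)) * (x:ℝ))) := rfl
    rw [this, integral_exp_mul_complex hc]
    have h1 : Complex.I * (m:ℂ) * ((2*π:ℝ):ℂ) = (m:ℂ) * (2*π*Complex.I) := by
      push_cast; ring
    have h2 : Complex.I * (m:ℂ) * ((0:ℝ):ℂ) = 0 := by push_cast; ring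
    rw [h1, h2, Complex.exp_int_mul_two_pi_mul_I, Complex.exp_zero, sub_self, zero_div]

lemma fc_trig (n : ℕ) (hn : 1 ≤ n) (A C B : ℝ) (k : ℤ) :
    fc (fun x => ((A * Real.cos (n * x) + C * Real.sin (n * x) + B : ℝ) : ℂ)) k =
      if k = (n:ℤ) then ((A:ℂ) - C * Complex.I)/2
      else if k = -(n:ℤ) then ((A:ℂ) + C * Complex.I)/2
      else if k = 0 then (B:ℂ) else 0 := by
  have key : ∀ x : ℝ,
      ((A * Real.cos (n * x) + C * Real.sin (n * x) + B : ℝ) : ℂ) *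
        Complex.exp (-Complex.I * (k:ℂ) * (x:ℂ))
      = ((A:ℂ) - C * Complex.I)/2 * Complex.exp (Complex.I * (((n:ℤ) - k : ℤ):ℂ) * (x:ℝ))
      + ((A:ℂ) + C * Complex.I)/2 * Complex.exp (Complex.I * (((-(n:ℤ) - k : ℤ)):ℂ) * (x:ℝ))
      + (B:ℂ) * Complex.exp (Complex.I * (((-k : ℤ)):ℂ) * (x:ℝ)) := by
    intro x
    have h1 : Complex.exp (Complex.I * (((n:ℤ) - k : ℤ):ℂ) * (x:ℝ))
        = Complex.exp ((n:ℂ) * (x:ℂ) * Complex.I) * Complex.exp (-Complex.I * (k:ℂ) * (x:ℂ)) := by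
      rw [← Complex.exp_add]; congr 1; push_cast; ring
    have h2 : Complex.exp (Complex.I * (((-(n:ℤ) - k : ℤ)):ℂ) * (x:ℝ))
        = Complex.exp (-((n:ℂ) * (x:ℂ)) * Complex.I) * Complex.exp (-Complex.I * (k:ℂ) * (x:ℂ)) := by
      rw [← Complex.exp_add]; congr 1; push_cast; ring
    have h3 : Complex.exp (Complex.I * (((-k : ℤ)):ℂ) * (x:ℝ))
        = Complex.exp (-Complex.I * (k:ℂ) * (x:ℂ)) := by
      congr 1; push_cast; ring
    rw [h1, h2, h3]
    push_cast
    rw [Complex.cos, Complex.sin]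
    ring
  have ig : ∀ (c : ℂ) (m : ℤ), IntervalIntegrable
      (fun x : ℝ => c * Complex.exp (Complex.I * (m:ℂ) * (x:ℝ))) MeasureTheory.volume 0 (2*π) := by
    intro c m
    apply Continuous.intervalIntegrable
    fun_prop
  unfold fc
  rw [intervalIntegral.integral_congr (g := fun x : ℝ =>
      ((A:ℂ) - C * Complex.I)/2 * Complex.exp (Complex.I * (((n:ℤ) - k : ℤ):ℂ) * (x:ℝ))
      + ((A:ℂ) + C * Complex.I)/2 * Complex.exp (Complex.I * (((-(n:ℤ) - k : ℤ)):ℂ) * (x:ℝ))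
      + (B:ℂ) * Complex.exp (Complex.I * (((-k : ℤ)):ℂ) * (x:ℝ))) (fun x _ => key x)]
  rw [intervalIntegral.integral_add (((ig _ _).add (ig _ _))) (ig _ _),
      intervalIntegral.integral_add (ig _ _) (ig _ _),
      intervalIntegral.integral_const_mul, intervalIntegral.integral_const_mul,
      intervalIntegral.integral_const_mul, intExp, intExp, intExp]
  have hpi : ((2*π:ℝ):ℂ) ≠ 0 := by
    simp [Real.pi_ne_zero]
  have hpi2 : ((π:ℝ):ℂ) ≠ 0 := Complex.ofReal_ne_zero.mpr Real.pi_ne_zero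
  rcases eq_or_ne k (n:ℤ) with hk | hk
  · have e1 : (n:ℤ) - k = 0 := by omega
    have e2 : -(n:ℤ) - k ≠ 0 := by omega
    have e3 : (-k : ℤ) ≠ 0 := by omega
    rw [if_pos e1, if_neg e2, if_neg e3, if_pos hk]
    push_cast
    field_simp [hpi2]
    ring
  · rcases eq_or_ne k (-(n:ℤ)) with hk2 | hk2
    · have e1 : (n:ℤ) - k ≠ 0 := by omega
      have e2 : -(n:ℤ) - k = 0 := by omega
      have e3 : (-k : ℤ) ≠ 0 := by omega
      rw [if_neg e1, if_pos e2, if_neg e3, if_neg hk, if_pos hk2]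
      push_cast
      field_simp
      ring
    · rcases eq_or_ne k 0 with hk3 | hk3
      · have e1 : (n:ℤ) - k ≠ 0 := by omega
        have e2 : -(n:ℤ) - k ≠ 0 := by omega
        rw [if_neg e1, if_neg e2, if_pos (by omega : (-k:ℤ) = 0), if_neg hk, if_neg hk2, if_pos hk3]
        push_cast
        field_simp
        ring
      · rw [if_neg (by omega : (n:ℤ) - k ≠ 0), if_neg (by omega : -(n:ℤ) - k ≠ 0),
            if_neg (by omega : (-k:ℤ) ≠ 0), if_neg hk, if_neg hk2, if_neg hk3]
        simp

lemma hs_trig (s : ℝ) (n : ℕ) (hn : 1 ≤ n) (A C B : ℝ) :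
    HsNormR s (fun x => A * Real.cos (n * x) + C * Real.sin (n * x) + B) =
      Real.sqrt ((1 + (n:ℝ)^2)^s * ((A^2 + C^2)/2) + B^2) := by
  unfold HsNormR HsNorm
  congr 1
  have hn' : (1:ℤ) ≤ (n:ℤ) := by exact_mod_cast hn
  have hnn : ((n:ℤ)) ≠ -(n:ℤ) := by omega
  have hn0 : ((n:ℤ)) ≠ 0 := by omega
  have hmn0 : (-(n:ℤ)) ≠ 0 := by omega
  have hterm : ∀ k : ℤ, (1 + (k : ℝ)^2)^s * ‖fc (fun x =>
      ((A * Real.cos (n * x) + C * Real.sin (n * x) + B : ℝ) : ℂ)) k‖^2 =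
      (if k = (n:ℤ) then (1 + (n:ℝ)^2)^s * ((A^2+C^2)/4)
       else if k = -(n:ℤ) then (1 + (n:ℝ)^2)^s * ((A^2+C^2)/4)
       else if k = 0 then B^2 else 0) := by
    intro k
    rw [fc_trig n hn A C B k]
    rcases eq_or_ne k (n:ℤ) with hk | hk
    · rw [if_pos hk, if_pos hk, hk]
      have : ‖((A:ℂ) - C * Complex.I)/2‖^2 = (A^2+C^2)/4 := by
        rw [norm_div, div_pow, Complex.sq_norm, Complex.normSq_apply]
        simp
        ring
      rw [this]
      push_cast
      ring
    · rw [if_neg hk, if_neg hk]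
      rcases eq_or_ne k (-(n:ℤ)) with hk2 | hk2
      · rw [if_pos hk2, if_pos hk2, hk2]
        have : ‖((A:ℂ) + C * Complex.I)/2‖^2 = (A^2+C^2)/4 := by
          rw [norm_div, div_pow, Complex.sq_norm, Complex.normSq_apply]
          simp
          ring
        rw [this]
        push_cast
        ring
      · rw [if_neg hk2, if_neg hk2]
        rcases eq_or_ne k 0 with hk3 | hk3
        · rw [if_pos hk3, if_pos hk3, hk3]
          simp [Complex.norm_real, sq_abs]
        · rw [if_neg hk3, if_neg hk3]
          simp
  rw [tsum_congr hterm, tsum_eq_sum (s := ({(n:ℤ), -(n:ℤ), 0} : Finset ℤ))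
      (by intro k hk
          simp only [Finset.mem_insert, Finset.mem_singleton] at hk
          push_neg at hk
          rw [if_neg hk.1, if_neg hk.2.1, if_neg hk.2.2])]
  rw [Finset.sum_insert (by simp [hnn, hn0]; omega), Finset.sum_insert (by simp [hmn0])]
  rw [Finset.sum_singleton]
  have h1 : (-(n:ℤ) = (n:ℤ)) = False := by simp [hnn.symm]
  have h2 : ((0:ℤ) = (n:ℤ)) = False := by simp [hn0.symm, Ne.symm]
  have h3 : ((0:ℤ) = -(n:ℤ)) = False := by simp [hmn0.symm, Ne.symm]
  simp only [if_pos rfl, h1, h2, h3, if_false, if_true]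
  ring

lemma mean_trig (n : ℕ) (hn : 1 ≤ n) (A C B : ℝ) :
    meanR (fun x => A * Real.cos (n * x) + C * Real.sin (n * x) + B) = B := by
  have h0 := fc_trig n hn A C B 0
  have hn0 : (0:ℤ) ≠ (n:ℤ) := by omega
  have hn1 : (0:ℤ) ≠ -(n:ℤ) := by omega
  rw [if_neg hn0, if_neg hn1, if_pos rfl] at h0
  have hcast : ((meanR (fun x => A * Real.cos (n * x) + C * Real.sin (n * x) + B) : ℝ) : ℂ)
      = fc (fun x => ((A * Real.cos (n * x) + C * Real.sin (n * x) + B : ℝ) : ℂ)) 0 := by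
    unfold meanR fc
    rw [intervalIntegral.integral_congr (g := fun x : ℝ =>
        ((A * Real.cos (n * x) + C * Real.sin (n * x) + B : ℝ) : ℂ))
      (by intro x _; simp)]
    rw [intervalIntegral.integral_ofReal]
    push_cast
    ring
  rw [h0] at hcast
  exact_mod_cast hcast

lemma rpow_bounds (s : ℝ) (hs : 0 ≤ s) (n : ℕ) (hn : 1 ≤ n) :
    1 ≤ (1 + (n:ℝ)^2)^s * ((n:ℝ)^(-s))^2 ∧ (1 + (n:ℝ)^2)^s * ((n:ℝ)^(-s))^2 ≤ 2^s := by
  have h1 : (1:ℝ) ≤ (n:ℝ) := by exact_mod_cast hn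
  have hn0 : (0:ℝ) < n := by linarith
  have hq : 0 < (n:ℝ)^s := Real.rpow_pos_of_pos hn0 s
  have hinv : (n:ℝ)^(-s) = ((n:ℝ)^s)⁻¹ := Real.rpow_neg hn0.le s
  have hsq : ((n:ℝ)^2)^s = ((n:ℝ)^s)^2 := by
    rw [← Real.rpow_natCast ((n:ℝ)^s) 2, ← Real.rpow_natCast (n:ℝ) 2,
        ← Real.rpow_mul hn0.le, ← Real.rpow_mul hn0.le]
    norm_num [mul_comm]
  have hz : 0 < (((n:ℝ)^s)^2)⁻¹ := by positivity
  have hc : ((n:ℝ)^s)^2 * (((n:ℝ)^s)^2)⁻¹ = 1 := mul_inv_cancel₀ (by positivity)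
  have hinv2 : ((n:ℝ)^(-s))^2 = (((n:ℝ)^s)^2)⁻¹ := by rw [hinv, inv_pow]
  constructor
  · have hlow : ((n:ℝ)^s)^2 ≤ (1 + (n:ℝ)^2)^s := by
      rw [← hsq]
      exact Real.rpow_le_rpow (by positivity) (by nlinarith) hs
    rw [hinv2]
    calc (1:ℝ) = ((n:ℝ)^s)^2 * (((n:ℝ)^s)^2)⁻¹ := hc.symm
      _ ≤ (1 + (n:ℝ)^2)^s * (((n:ℝ)^s)^2)⁻¹ := mul_le_mul_of_nonneg_right hlow hz.le
  · have hup : (1 + (n:ℝ)^2)^s ≤ 2^s * ((n:ℝ)^s)^2 := by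
      rw [← hsq, ← Real.mul_rpow (by norm_num) (by positivity)]
      exact Real.rpow_le_rpow (by positivity) (by nlinarith) hs
    rw [hinv2]
    calc (1 + (n:ℝ)^2)^s * (((n:ℝ)^s)^2)⁻¹ ≤ 2^s * ((n:ℝ)^s)^2 * (((n:ℝ)^s)^2)⁻¹ :=
          mul_le_mul_of_nonneg_right hup hz.le
      _ = 2^s := by rw [mul_assoc, hc, mul_one]

theorem galilean_not_uniformly_continuous
    (s : ℝ) (hs : 0 ≤ s) (t : ℝ) (ht : t ∈ Set.Ioc (0:ℝ) 1)
    (u v : ℕ → ℝ → ℝ)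
    (hu : ∀ n x, u n x = (n : ℝ)^(-s) * Real.cos (n * x) + (n : ℝ)⁻¹)
    (hv : ∀ n x, v n x = (n : ℝ)^(-s) * Real.cos (n * x)) :
    Tendsto (fun n => HsNormR s (fun x => u n x - v n x)) atTop (nhds 0) ∧
    (∃ M : ℝ, ∀ n : ℕ, 1 ≤ n → HsNormR s (u n) ≤ M ∧ HsNormR s (v n) ≤ M) ∧
    (∃ c : ℝ, 0 < c ∧
      c * |Real.sin t| ≤
        liminf (fun n => HsNormR s (fun x => Gal t (u n) x - Gal t (v n) x)) atTop) := by
  obtain ⟨ht0, ht1⟩ := ht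
  have hcos1 : Real.cos t ≤ 1 := Real.cos_le_one t
  have hcosm1 : -1 ≤ Real.cos t := Real.neg_one_le_cos t
  have hpyth : Real.sin t ^ 2 + Real.cos t ^ 2 = 1 := Real.sin_sq_add_cos_sq t
  -- part 1
  have part1 : Tendsto (fun n => HsNormR s (fun x => u n x - v n x)) atTop (nhds 0) := by
    have hev : ∀ n : ℕ, 1 ≤ n → HsNormR s (fun x => u n x - v n x) = (n:ℝ)⁻¹ := by
      intro n hn
      have hf : (fun x => u n x - v n x)
          = fun x => 0 * Real.cos ((1:ℕ) * x) + 0 * Real.sin ((1:ℕ) * x) + (n:ℝ)⁻¹ := by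
        funext x; rw [hu, hv]; push_cast; ring
      rw [hf, hs_trig s 1 le_rfl 0 0 ((n:ℝ)⁻¹)]
      rw [show (1 + ((1:ℕ):ℝ)^2)^s * ((0^2 + 0^2)/2) + ((n:ℝ)⁻¹)^2 = ((n:ℝ)⁻¹)^2 by
        push_cast; ring]
      exact Real.sqrt_sq (by positivity)
    apply tendsto_inv_atTop_nhds_zero_nat.congr'
    filter_upwards [eventually_ge_atTop 1] with n hn
    exact (hev n hn).symm
  refine ⟨part1, ?_, ?_⟩
  -- part 2
  · refine ⟨Real.sqrt (2^s + 1), fun n hn => ?_⟩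
    have h1 : (1:ℝ) ≤ (n:ℝ) := by exact_mod_cast hn
    have hnne : (n:ℝ) ≠ 0 := by positivity
    have hb2 := (rpow_bounds s hs n hn).2
    have hinv1 : (n:ℝ)⁻¹ ≤ 1 := by
      nlinarith [mul_inv_cancel₀ hnne, inv_nonneg.mpr (by positivity : (0:ℝ) ≤ (n:ℝ))]
    have hK : (0:ℝ) ≤ (1 + (n:ℝ)^2)^s := (Real.rpow_nonneg (by positivity) s)
    have hs2 : (0:ℝ) < 2^s := Real.rpow_pos_of_pos (by norm_num) s
    constructor
    · have hf : u n = fun x => (n:ℝ)^(-s) * Real.cos (n*x) + 0 * Real.sin (n*x) + (n:ℝ)⁻¹ := by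
        funext x; rw [hu]; ring
      rw [hf, hs_trig s n hn]
      apply Real.sqrt_le_sqrt
      have hinvsq : ((n:ℝ)⁻¹)^2 ≤ 1 := by
        nlinarith [inv_nonneg.mpr (show (0:ℝ) ≤ (n:ℝ) by positivity)]
      nlinarith [hinvsq]
    · have hf : v n = fun x => (n:ℝ)^(-s) * Real.cos (n*x) + 0 * Real.sin (n*x) + 0 := by
        funext x; rw [hv]; ring
      rw [hf, hs_trig s n hn]
      apply Real.sqrt_le_sqrt
      nlinarith
  -- part 3
  · refine ⟨1/2, by norm_num, ?_⟩
    have hval : ∀ n : ℕ, 1 ≤ n → HsNormR s (fun x => Gal t (u n) x - Gal t (v n) x)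
        = Real.sqrt ((1 + (n:ℝ)^2)^s *
            ((((n:ℝ)^(-s)*(Real.cos t - 1))^2 + (-((n:ℝ)^(-s) * Real.sin t))^2)/2)
          + (0:ℝ)^2) := by
      intro n hn
      have h1 : (1:ℝ) ≤ (n:ℝ) := by exact_mod_cast hn
      have hnne : (n:ℝ) ≠ 0 := by positivity
      have hmu : meanR (u n) = (n:ℝ)⁻¹ := by
        have hf : u n = fun x => (n:ℝ)^(-s) * Real.cos (n*x) + 0 * Real.sin (n*x) + (n:ℝ)⁻¹ := by
          funext x; rw [hu]; ring
        rw [hf, mean_trig n hn]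
      have hmv : meanR (v n) = 0 := by
        have hf : v n = fun x => (n:ℝ)^(-s) * Real.cos (n*x) + 0 * Real.sin (n*x) + 0 := by
          funext x; rw [hv]; ring
        rw [hf, mean_trig n hn]
      have hgf : (fun x => Gal t (u n) x - Gal t (v n) x)
          = fun x => ((n:ℝ)^(-s)*(Real.cos t - 1)) * Real.cos (n*x)
              + (-((n:ℝ)^(-s) * Real.sin t)) * Real.sin (n*x) + (0:ℝ) := by
        funext x
        simp only [Gal, hmu, hmv, mul_zero, add_zero]
        rw [hu, hv]
        rw [show (n:ℝ) * (x + t * (n:ℝ)⁻¹) = (n:ℝ)*x + t by field_simp, Real.cos_add]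
        ring
      rw [hgf, hs_trig s n hn]
    apply Filter.le_liminf_of_le
    · apply Filter.isCoboundedUnder_ge_of_eventually_le atTop (x := Real.sqrt (2^s * 8 + 1))
      filter_upwards [eventually_ge_atTop 1] with n hn
      rw [hval n hn]
      have h1 : (1:ℝ) ≤ (n:ℝ) := by exact_mod_cast hn
      have hnne : (n:ℝ) ≠ 0 := by positivity
      have hb2 := (rpow_bounds s hs n hn).2
      have hK : (0:ℝ) ≤ (1 + (n:ℝ)^2)^s := Real.rpow_nonneg (by positivity) s
      have hinv1 : (n:ℝ)⁻¹ ≤ 1 := by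
        nlinarith [mul_inv_cancel₀ hnne, inv_nonneg.mpr (by positivity : (0:ℝ) ≤ (n:ℝ))]
      apply Real.sqrt_le_sqrt
      have hsin2 : Real.sin t ^ 2 ≤ 1 := by nlinarith
      nlinarith [sq_nonneg ((n:ℝ)^(-s)), mul_nonneg hK (sq_nonneg ((n:ℝ)^(-s))),
        inv_nonneg.mpr (by positivity : (0:ℝ) ≤ (n:ℝ))]
    · filter_upwards [eventually_ge_atTop 1] with n hn
      rw [hval n hn]
      have hb1 := (rpow_bounds s hs n hn).1
      calc (1/2) * |Real.sin t| = Real.sqrt (((1/2) * |Real.sin t|)^2) := by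
            rw [Real.sqrt_sq (by positivity)]
        _ ≤ _ := by
            apply Real.sqrt_le_sqrt
            rw [mul_pow, sq_abs]
            nlinarith [sq_nonneg ((n:ℝ)⁻¹), sq_nonneg (1 - Real.cos t),
              mul_nonneg (sub_nonneg.mpr hb1) (sub_nonneg.mpr hcos1)]
end

section
/- Let ω(m,n) = m^5 + n^2/m and α(n) = n(n+1)√(5n^2+5n+5). Define Ω_{n+1} := ω(n+2, α(n)) − ω(1,0) − ω(n+1, α(n)) and Ω_{n−1} := −(ω(n, α(n)) − ω(1,0) − ω(n−1, α(n))). Then there exist constants c, C > 0 such that for all sufficiently large n, c·n^3 ≤ |Ω_{n±1}| ≤ C·n^3. -/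
/-- Resonant transverse frequency. -/
noncomputable def alphaRes (n : ℕ) : ℝ :=
  (n : ℝ) * ((n : ℝ) + 1) * Real.sqrt (5 * (n : ℝ)^2 + 5 * (n : ℝ) + 5)

theorem neighbor_resonance_size :
    ∃ c C : ℝ, 0 < c ∧ 0 < C ∧ ∃ N : ℕ, ∀ n : ℕ, N ≤ n →
      (c * (n : ℝ)^3 ≤
          |omega5 ((n : ℝ) + 2) (alphaRes n) - omega5 1 0 - omega5 ((n : ℝ) + 1) (alphaRes n)| ∧
        |omega5 ((n : ℝ) + 2) (alphaRes n) - omega5 1 0 - omega5 ((n : ℝ) + 1) (alphaRes n)| ≤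
          C * (n : ℝ)^3) ∧
      (c * (n : ℝ)^3 ≤
          |-(omega5 (n : ℝ) (alphaRes n) - omega5 1 0 - omega5 ((n : ℝ) - 1) (alphaRes n))| ∧
        |-(omega5 (n : ℝ) (alphaRes n) - omega5 1 0 - omega5 ((n : ℝ) - 1) (alphaRes n))| ≤
          C * (n : ℝ)^3) := by
  refine ⟨1, 1000, one_pos, by norm_num, 2, fun n hn => ?_⟩
  set x : ℝ := (n : ℝ) with hx
  have hx2 : (2 : ℝ) ≤ x := by
    rw [hx]; exact_mod_cast hn
  have hx0 : (0 : ℝ) < x := by linarith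
  have hrad : (0 : ℝ) ≤ 5 * x ^ 2 + 5 * x + 5 := by positivity
  have hs : Real.sqrt (5 * x ^ 2 + 5 * x + 5) ^ 2 = 5 * x ^ 2 + 5 * x + 5 :=
    Real.sq_sqrt hrad
  have hA : alphaRes n ^ 2 = x ^ 2 * (x + 1) ^ 2 * (5 * x ^ 2 + 5 * x + 5) := by
    rw [alphaRes, mul_pow, mul_pow, hs]
  have h1 : (0 : ℝ) < x + 1 := by linarith
  have h2 : (0 : ℝ) < x + 2 := by linarith
  have hm1 : (0 : ℝ) < x - 1 := by linarith
  have hE1 : omega5 (x + 2) (alphaRes n) - omega5 1 0 - omega5 (x + 1) (alphaRes n)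
      = 30 * (x + 1) ^ 2 * (x ^ 2 + 2 * x + 2) / (x + 2) := by
    simp only [omega5, hA]
    field_simp
    ring
  have hE2 : -(omega5 x (alphaRes n) - omega5 1 0 - omega5 (x - 1) (alphaRes n))
      = 30 * x ^ 2 * (x ^ 2 + 1) / (x - 1) := by
    simp only [omega5, hA]
    field_simp
    ring
  rw [hE1, hE2]
  have hP1 : (0 : ℝ) < 30 * (x + 1) ^ 2 * (x ^ 2 + 2 * x + 2) / (x + 2) := by positivity
  have hP2 : (0 : ℝ) < 30 * x ^ 2 * (x ^ 2 + 1) / (x - 1) := by positivity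
  rw [abs_of_pos hP1, abs_of_pos hP2]
  refine ⟨⟨?_, ?_⟩, ?_, ?_⟩
  · rw [le_div_iff₀ h2]; nlinarith
  · rw [div_le_iff₀ h2]; nlinarith
  · rw [le_div_iff₀ hm1]; nlinarith
  · rw [div_le_iff₀ hm1]
    have h2' : (0 : ℝ) ≤ x - 2 := by linarith
    nlinarith [mul_nonneg (sq_nonneg x) h2', mul_nonneg (mul_nonneg (sq_nonneg x) h2') hx0.le]
end
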